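/- arXiv:1609.07817 — 4 statements merged into one kernel-verified Lean document; each statement's English description precedes it below -/
import Mathlib

section
/- For natural numbers K ≥ 1 and 1 ≤ m ≤ K, the sequence c_t = (C(K, t+1) - C(K-m, t+1)) / C(K, t), defined for t ∈ {0, 1, ..., K}, is nonincreasing in t. -/
/-!
Pascal's rule telescopes the numerator into `∑_{j=1}^{m} C(K-j, t)`, and the identity
`C(K-j, t) C(K, j) = C(K-t, j) C(K, t)` (both count the ways to pick disjoint sets of sizes `j`
and `t`) turns the rate into `c_t = ∑_{j=1}^{m} C(K-t, j) / C(K, j)`, where every term is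
visibly nonincreasing in `t`.
-/

open Finset

namespace Nat

theorem choose_sub_mul_choose_comm (n j t : ℕ) :
    (n - j).choose t * n.choose j = (n - t).choose j * n.choose t := by
  rcases le_or_gt (j + t) n with h | h
  · have hj := choose_mul (n := n) (k := j + t) (s := j) (le_add_right j t)
    have ht := choose_mul (n := n) (k := j + t) (s := t) (le_add_left t j)
    rw [Nat.add_sub_cancel_left, choose_symm_add] at hj
    rw [Nat.add_sub_cancel] at ht
    linarith
  · have vanish : ∀ a b, n < a + b → (n - a).choose b * n.choose a = 0 := by
      intro a b hab
      rcases le_or_gt a n with ha | ha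
      · simp [choose_eq_zero_of_lt (by omega : n - a < b)]
      · simp [choose_eq_zero_of_lt ha]
    rw [vanish j t h, vanish t j (by omega)]

theorem choose_succ_eq_choose_sub_add_sum (n m k : ℕ) (hmn : m ≤ n) :
    n.choose (k + 1) = (n - m).choose (k + 1) + ∑ j ∈ Icc 1 m, (n - j).choose k := by
  induction m with
  | zero => simp
  | succ m ih =>
    rw [ih (by omega), sum_Icc_succ_top (by omega), show n - m = n - (m + 1) + 1 by omega,
      choose_succ_succ]
    ring

end Nat

theorem choose_succ_sub_choose_sub_div_choose {𝕜 : Type*} [Field 𝕜] [CharZero 𝕜]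
    {n m k : ℕ} (hmn : m ≤ n) (hkn : k ≤ n) :
    ((n.choose (k + 1) : 𝕜) - (n - m).choose (k + 1)) / n.choose k =
      ∑ j ∈ Icc 1 m, ((n - k).choose j : 𝕜) / n.choose j := by
  have hk : (n.choose k : 𝕜) ≠ 0 := by exact_mod_cast (Nat.choose_pos hkn).ne'
  rw [Nat.choose_succ_eq_choose_sub_add_sum n m k hmn]
  push_cast
  rw [add_sub_cancel_left, sum_div]
  refine sum_congr rfl fun j hj => ?_
  have hjn : (n.choose j : 𝕜) ≠ 0 := by
    exact_mod_cast (Nat.choose_pos ((mem_Icc.mp hj).2.trans hmn)).ne'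
  rw [div_eq_div_iff hk hjn]
  exact_mod_cast Nat.choose_sub_mul_choose_comm n j k

theorem stmt_3_general (K m : ℕ) (hmK : m ≤ K)
    (c : ℕ → ℚ)
    (hc : ∀ t, c t = ((K.choose (t + 1) : ℚ) - ((K - m).choose (t + 1) : ℚ)) / (K.choose t : ℚ)) :
    ∀ t, t + 1 ≤ K → c (t + 1) ≤ c t := by
  intro t ht
  rw [hc, hc, choose_succ_sub_choose_sub_div_choose hmK ht,
    choose_succ_sub_choose_sub_div_choose hmK (by omega)]
  gcongr
  omega

theorem stmt_3 (K m : ℕ) (hK : 1 ≤ K) (hm1 : 1 ≤ m) (hmK : m ≤ K)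
    (c : ℕ → ℚ)
    (hc : ∀ t, c t = ((K.choose (t + 1) : ℚ) - ((K - m).choose (t + 1) : ℚ)) / (K.choose t : ℚ)) :
    ∀ t, t + 1 ≤ K → c (t + 1) ≤ c t :=
  stmt_3_general K m hmK c hc
end

section
/- Let p be a real number with 0 < p ≤ 1, and let K, n be natural numbers with 1 ≤ n ≤ K. Then ∑_{j=0}^{K} p^j (1-p)^{K-j} (C(K, j+1) - C(K-n, j+1)) = ((1-p)/p) · (1 - (1-p)^n), where C(a,b) = 0 for b > a. -/
open Finset

private lemma aux8 (p : ℝ) (m K : ℕ) (hm : m ≤ K) :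
    (∑ j ∈ Finset.range (K + 1),
        p ^ j * (1 - p) ^ (K - j) * (m.choose (j + 1) : ℝ)) * p
      = (1 - p) ^ (K + 1 - m) - (1 - p) ^ (K + 1) := by
  set q : ℝ := 1 - p with hq
  have key : ∑ i ∈ Finset.range (K + 2), (m.choose i : ℝ) * p ^ i * q ^ (K + 1 - i)
      = q ^ (K + 1 - m) := by
    rw [← Finset.sum_subset (Finset.range_subset_range.mpr (by omega) :
        Finset.range (m + 1) ⊆ Finset.range (K + 2))
        (by
          intro i _ hi
          simp only [Finset.mem_range, not_lt] at hi
          rw [Nat.choose_eq_zero_of_lt (by omega)]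
          simp)]
    have : ∀ i ∈ Finset.range (m + 1),
        (m.choose i : ℝ) * p ^ i * q ^ (K + 1 - i)
          = (p ^ i * q ^ (m - i) * (m.choose i : ℝ)) * q ^ (K + 1 - m) := by
      intro i hi
      simp only [Finset.mem_range] at hi
      have h1 : K + 1 - i = (m - i) + (K + 1 - m) := by omega
      rw [h1, pow_add]; ring
    rw [Finset.sum_congr rfl this, ← Finset.sum_mul, ← add_pow]
    have : p + q = 1 := by rw [hq]; ring
    rw [this, one_pow, one_mul]
  have shift : ∑ i ∈ Finset.range (K + 2), (m.choose i : ℝ) * p ^ i * q ^ (K + 1 - i)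
      = (∑ j ∈ Finset.range (K + 1), (m.choose (j + 1) : ℝ) * p ^ (j + 1) * q ^ (K + 1 - (j + 1)))
        + (m.choose 0 : ℝ) * p ^ 0 * q ^ (K + 1 - 0) := by
    exact Finset.sum_range_succ' _ (K + 1)
  rw [key] at shift
  have hterm : ∀ j ∈ Finset.range (K + 1),
      p ^ j * q ^ (K - j) * (m.choose (j + 1) : ℝ) * p
        = (m.choose (j + 1) : ℝ) * p ^ (j + 1) * q ^ (K + 1 - (j + 1)) := by
    intro j hj
    simp only [Finset.mem_range] at hj
    have : K + 1 - (j + 1) = K - j := by omega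
    rw [this, pow_succ]; ring
  rw [Finset.sum_mul, Finset.sum_congr rfl hterm]
  have : K + 1 - 0 = K + 1 := rfl
  simp only [Nat.choose_zero_right, Nat.cast_one, pow_zero, one_mul, this] at shift
  linarith [shift]

theorem stmt_8 (p : ℝ) (hp0 : 0 < p) (hp1 : p ≤ 1) (K n : ℕ) (hn1 : 1 ≤ n) (hnK : n ≤ K) :
    ∑ j ∈ Finset.range (K + 1),
        p ^ j * (1 - p) ^ (K - j) * ((K.choose (j + 1) : ℝ) - ((K - n).choose (j + 1) : ℝ))
      = ((1 - p) / p) * (1 - (1 - p) ^ n) := by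
  have h1 := aux8 p K K le_rfl
  have h2 := aux8 p (K - n) K (Nat.sub_le _ _)
  have hsplit : (∑ j ∈ Finset.range (K + 1),
      p ^ j * (1 - p) ^ (K - j) * ((K.choose (j + 1) : ℝ) - ((K - n).choose (j + 1) : ℝ))) * p
      = (∑ j ∈ Finset.range (K + 1), p ^ j * (1 - p) ^ (K - j) * (K.choose (j + 1) : ℝ)) * p
        - (∑ j ∈ Finset.range (K + 1), p ^ j * (1 - p) ^ (K - j) * ((K - n).choose (j + 1) : ℝ)) * p := by
    rw [← sub_mul, ← Finset.sum_sub_distrib]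
    congr 1
    apply Finset.sum_congr rfl
    intro j _
    ring
  rw [h1, h2] at hsplit
  have e1 : K + 1 - K = 1 := by omega
  have e2 : K + 1 - (K - n) = n + 1 := by omega
  rw [e1, e2] at hsplit
  have hp : p ≠ 0 := ne_of_gt hp0
  have : ((1 - p) / p * (1 - (1 - p) ^ n)) * p = (1 - p) ^ 1 - (1 - p) ^ (n + 1) := by
    field_simp
    ring
  apply mul_right_cancel₀ hp
  rw [hsplit, this]; ring
end

section
/- Let K, N be positive naturals, let d : Fin K → Fin N be a demand, and let U ⊆ Fin K be a set of leaders such that d restricted to U is injective and d(U) = d(Fin K) (every requested file is requested by exactly one leader). Let B ⊆ Fin K with U ⊆ B, and let V_F be the family of all subsets V ⊆ B such that d restricted to V is injective and d(V) = d(Fin K). For subfiles W : Fin N × Finset (Fin K) → ZMod 2, define Y(A) = ∑_{x ∈ A} W(d(x), A \ {x}) (sum in ZMod 2). Then ∑_{V ∈ V_F} Y(B \ V) = 0 in ZMod 2. -/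
open Classical in
noncomputable def lead10 {K N : ℕ} (d : Fin K → Fin N) (V : Finset (Fin K)) (x : Fin K) :
    Fin K :=
  if h : ∃! y, y ∈ V ∧ d y = d x then h.choose else x

lemma lead10_step {K N : ℕ} (d : Fin K → Fin N) (B V : Finset (Fin K)) (x : Fin K)
    (hVB : V ⊆ B)
    (hinj : ∀ a ∈ V, ∀ b ∈ V, d a = d b → a = b)
    (himg : V.image d = Finset.univ.image d)
    (hxB : x ∈ B) (hxV : x ∉ V) :
    lead10 d V x ∈ V ∧ d (lead10 d V x) = d x ∧
    insert x (V.erase (lead10 d V x)) ⊆ B ∧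
    (∀ a ∈ insert x (V.erase (lead10 d V x)), ∀ b ∈ insert x (V.erase (lead10 d V x)),
      d a = d b → a = b) ∧
    (insert x (V.erase (lead10 d V x))).image d = Finset.univ.image d ∧
    lead10 d V x ∉ insert x (V.erase (lead10 d V x)) ∧
    (B \ insert x (V.erase (lead10 d V x))).erase (lead10 d V x) = (B \ V).erase x ∧
    lead10 d (insert x (V.erase (lead10 d V x))) (lead10 d V x) = x ∧
    insert (lead10 d V x) ((insert x (V.erase (lead10 d V x))).erase x) = V := by
  classical
  have hmem : d x ∈ V.image d := by
    rw [himg]; exact Finset.mem_image_of_mem d (Finset.mem_univ x)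
  obtain ⟨y0, hy0V, hy0d⟩ := Finset.mem_image.mp hmem
  have huniq : ∃! y, y ∈ V ∧ d y = d x :=
    ⟨y0, ⟨hy0V, hy0d⟩, fun z hz => hinj z hz.1 y0 hy0V (hz.2.trans hy0d.symm)⟩
  have hlead : lead10 d V x = huniq.choose := by
    unfold lead10; rw [dif_pos huniq]
  set y := lead10 d V x with hy
  have hyspec : (y ∈ V ∧ d y = d x) ∧ ∀ z, (z ∈ V ∧ d z = d x) → z = y := by
    have h2 := huniq.choose_spec
    rw [hlead]
    exact ⟨h2.1, h2.2⟩
  have hyV : y ∈ V := hyspec.1.1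
  have hyd : d y = d x := hyspec.1.2
  have hxy : x ≠ y := fun h => hxV (h ▸ hyV)
  set V' := insert x (V.erase y) with hV'
  have hV'B : V' ⊆ B := by
    intro a ha
    rcases Finset.mem_insert.mp ha with h | h
    · exact h ▸ hxB
    · exact hVB (Finset.mem_of_mem_erase h)
  have hinj' : ∀ a ∈ V', ∀ b ∈ V', d a = d b → a = b := by
    intro a ha b hb hab
    rcases Finset.mem_insert.mp ha with ha' | ha' <;>
      rcases Finset.mem_insert.mp hb with hb' | hb'
    · exact ha'.trans hb'.symm
    · subst ha'
      exfalso
      have : b = y := hinj b (Finset.mem_of_mem_erase hb') y hyV (hab.symm.trans hyd.symm)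
      exact (Finset.ne_of_mem_erase hb') this
    · subst hb'
      exfalso
      have : a = y := hinj a (Finset.mem_of_mem_erase ha') y hyV (hab.trans hyd.symm)
      exact (Finset.ne_of_mem_erase ha') this
    · exact hinj a (Finset.mem_of_mem_erase ha') b (Finset.mem_of_mem_erase hb') hab
  have himg' : V'.image d = Finset.univ.image d := by
    have h1 : V = insert y (V.erase y) := (Finset.insert_erase hyV).symm
    rw [hV', Finset.image_insert, ← himg]
    conv_rhs => rw [h1]
    rw [Finset.image_insert, hyd]
  have hyV' : y ∉ V' := by
    rw [hV']
    simp only [Finset.mem_insert, Finset.mem_erase]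
    push_neg
    exact ⟨fun h => hxy h.symm, fun h _ => absurd rfl h⟩
  have hset : (B \ V').erase y = (B \ V).erase x := by
    ext a
    simp only [Finset.mem_erase, Finset.mem_sdiff, hV', Finset.mem_insert]
    constructor
    · rintro ⟨hay, haB, hax⟩
      push_neg at hax
      exact ⟨hax.1, haB, hax.2 hay⟩
    · rintro ⟨hax, haB, haV⟩
      refine ⟨fun h => haV (h ▸ hyV), haB, ?_⟩
      push_neg
      exact ⟨hax, fun _ => haV⟩
  have hlead' : lead10 d V' y = x := by
    have huniq' : ∃! z, z ∈ V' ∧ d z = d y :=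
      ⟨x, ⟨Finset.mem_insert_self _ _, hyd.symm⟩,
        fun z hz => hinj' z hz.1 x (Finset.mem_insert_self _ _) (hz.2.trans hyd)⟩
    unfold lead10
    rw [dif_pos huniq']
    exact (huniq'.choose_spec.2 x ⟨Finset.mem_insert_self _ _, hyd.symm⟩).symm
  have hback : insert y (V'.erase x) = V := by
    rw [hV', Finset.erase_insert (fun h => hxV (Finset.mem_of_mem_erase h))]
    exact Finset.insert_erase hyV
  exact ⟨hyV, hyd, hV'B, hinj', himg', hyV', hset, hlead', hback⟩

theorem stmt_10 (K N : ℕ) (hK : 0 < K) (hN : 0 < N) (d : Fin K → Fin N)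
    (U B : Finset (Fin K))
    (hUinj : ∀ x ∈ U, ∀ y ∈ U, d x = d y → x = y)
    (hUimg : U.image d = Finset.univ.image d)
    (hUB : U ⊆ B)
    (W : Fin N × Finset (Fin K) → ZMod 2)
    (Y : Finset (Fin K) → ZMod 2)
    (hY : ∀ A, Y A = ∑ x ∈ A, W (d x, A.erase x)) :
    ∑ V ∈ B.powerset.filter
        (fun V => (∀ x ∈ V, ∀ y ∈ V, d x = d y → x = y) ∧ V.image d = Finset.univ.image d),
      Y (B \ V) = 0 := by
  classical
  simp only [hY]
  rw [Finset.sum_sigma']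
  have hmem : ∀ p : Σ _ : Finset (Fin K), Fin K,
      p ∈ (B.powerset.filter
        (fun V => (∀ x ∈ V, ∀ y ∈ V, d x = d y → x = y) ∧
          V.image d = Finset.univ.image d)).sigma (fun V => B \ V) →
      p.1 ⊆ B ∧ (∀ x ∈ p.1, ∀ y ∈ p.1, d x = d y → x = y) ∧
        p.1.image d = Finset.univ.image d ∧ p.2 ∈ B ∧ p.2 ∉ p.1 := by
    intro p hp
    simp only [Finset.mem_sigma, Finset.mem_filter, Finset.mem_powerset,
      Finset.mem_sdiff] at hp
    exact ⟨hp.1.1, hp.1.2.1, hp.1.2.2, hp.2.1, hp.2.2⟩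
  refine Finset.sum_involution
    (fun p _ => ⟨insert p.2 (p.1.erase (lead10 d p.1 p.2)), lead10 d p.1 p.2⟩)
    ?_ ?_ ?_ ?_
  · intro p hp
    obtain ⟨hB, hinj, himg, hxB, hxV⟩ := hmem p hp
    obtain ⟨_, hyd, _, _, _, _, hset, _, _⟩ :=
      lead10_step d B p.1 p.2 hB hinj himg hxB hxV
    have : W (d (lead10 d p.1 p.2),
        (B \ insert p.2 (p.1.erase (lead10 d p.1 p.2))).erase (lead10 d p.1 p.2))
        = W (d p.2, (B \ p.1).erase p.2) := by rw [hyd, hset]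
    rw [this]
    exact CharTwo.add_self_eq_zero _
  · intro p hp _
    obtain ⟨hB, hinj, himg, hxB, hxV⟩ := hmem p hp
    intro h
    have h1 := congrArg Sigma.fst h
    simp only at h1
    have : p.2 ∈ p.1 := by rw [← h1]; exact Finset.mem_insert_self _ _
    exact hxV this
  · intro p hp
    obtain ⟨hB, hinj, himg, hxB, hxV⟩ := hmem p hp
    obtain ⟨hyV, _, hV'B, hinj', himg', hyV', _, _, _⟩ :=
      lead10_step d B p.1 p.2 hB hinj himg hxB hxV
    simp only [Finset.mem_sigma, Finset.mem_filter, Finset.mem_powerset, Finset.mem_sdiff]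
    exact ⟨⟨hV'B, hinj', himg'⟩, hB hyV, hyV'⟩
  · intro p hp
    obtain ⟨hB, hinj, himg, hxB, hxV⟩ := hmem p hp
    obtain ⟨hyV, _, _, _, _, _, _, hlead', hback⟩ :=
      lead10_step d B p.1 p.2 hB hinj himg hxB hxV
    simp only [hlead', hback]
end

section
/- Let m ≤ K be naturals with K ≥ 1, and 0 < p ≤ 1 real. Then the limit as K' → ∞ (K' ≥ K) of (C(K', ⌊pK'⌋+1) - C(K'-m, ⌊pK'⌋+1)) / C(K', ⌊pK'⌋) equals ((1-p)/p)·(1 - (1-p)^m). More precisely: for fixed m ≥ 1 and a sequence t_{K'} with t_{K'}/K' → p, the sequence (C(K', t_{K'}+1) - C(K'-m, t_{K'}+1)) / C(K', t_{K'}) converges to ((1-p)/p)(1-(1-p)^m). -/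
/-!
By Pascal's rule the numerator telescopes: `C(n, k+1) - C(n-m, k+1) = ∑_{j<m} C(n-(j+1), k)`.
Each ratio `C(n-(j+1), k) / C(n, k)` is a product of `j+1` consecutive ratios
`C(N-1, k) / C(N, k) = (N - k) / N`, each tending to `1 - p` when `k / n → p`,
so the limit is the geometric sum `∑_{j<m} (1-p)^(j+1) = ((1-p)/p) (1 - (1-p)^m)`.
-/

open Filter Finset Topology

theorem Nat.cast_sub_eq_max {R : Type*} [Ring R] [LinearOrder R] [IsStrictOrderedRing R]
    (a b : ℕ) : ((a - b : ℕ) : R) = max ((a : R) - b) 0 := by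
  rcases le_total b a with h | h
  · rw [Nat.cast_sub h, max_eq_left (by simpa using h)]
  · rw [Nat.sub_eq_zero_of_le h, max_eq_right (by simpa using h), Nat.cast_zero]

/-- Truncated subtraction makes both sides `0` when `n + 1 < k`. -/
theorem Nat.choose_div_choose_succ {K : Type*} [Field K] [CharZero K] (n k : ℕ) :
    (n.choose k : K) / (n + 1).choose k = ((n + 1 - k : ℕ) : K) / (n + 1) := by
  rcases eq_or_ne ((n + 1).choose k) 0 with h | h
  · have hk : n + 1 < k := Nat.choose_eq_zero_iff.mp h
    simp [h, Nat.sub_eq_zero_of_le hk.le]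
  · rw [div_eq_div_iff (by exact_mod_cast h) n.cast_add_one_ne_zero,
      mul_comm (((n + 1 - k : ℕ) : K))]
    exact_mod_cast Nat.choose_mul_succ_eq n k

theorem Nat.sum_choose_add_choose_sub {m n : ℕ} (k : ℕ) (h : m ≤ n) :
    ∑ j ∈ range m, (n - (j + 1)).choose k + (n - m).choose (k + 1) = n.choose (k + 1) := by
  induction m with
  | zero => simp
  | succ m ih =>
    have hsucc : n - m = n - (m + 1) + 1 := by omega
    rw [sum_range_succ, ← ih (by omega), hsucc, Nat.choose_succ_succ]
    ring

theorem div_eq_div_mul_div_of_zero_imp {K : Type*} [Field K] {a b c : K} (h : b = 0 → c = 0) :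
    c / a = b / a * (c / b) := by
  rcases eq_or_ne b 0 with hb | hb
  · simp [hb, h hb]
  · field_simp

section

variable {t : ℕ → ℕ} {p : ℝ}

theorem tendsto_cast_sub_sub_div (c : ℕ) (hp : p ≤ 1)
    (ht : Tendsto (fun n : ℕ => (t n : ℝ) / n) atTop (𝓝 p)) :
    Tendsto (fun n : ℕ => ((n - c - t n : ℕ) : ℝ) / n) atTop (𝓝 (1 - p)) := by
  have hc : Tendsto (fun n : ℕ => (c : ℝ) / n) atTop (𝓝 0) :=
    tendsto_const_div_atTop_nhds_zero_nat (c : ℝ)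
  have hlim : Tendsto (fun n : ℕ => max (1 - (c : ℝ) / n - t n / n) 0) atTop (𝓝 (1 - p)) := by
    simpa [max_eq_left (sub_nonneg.mpr hp)] using
      (((tendsto_const_nhds (x := (1 : ℝ))).sub hc).sub ht).max
        (tendsto_const_nhds (x := (0 : ℝ)))
  refine hlim.congr' ?_
  filter_upwards [eventually_gt_atTop 0] with n hn
  have hn' : (0 : ℝ) < n := by exact_mod_cast hn
  rw [Nat.sub_sub, Nat.cast_sub_eq_max, ← max_div_div_right hn'.le, zero_div]
  congr 1
  push_cast
  field_simp
  ring

theorem tendsto_choose_sub_succ_div_choose_sub (i : ℕ) (hp : p ≤ 1)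
    (ht : Tendsto (fun n : ℕ => (t n : ℝ) / n) atTop (𝓝 p)) :
    Tendsto (fun n : ℕ => ((n - (i + 1)).choose (t n) : ℝ) / (n - i).choose (t n))
      atTop (𝓝 (1 - p)) := by
  have hzero : Tendsto (fun n : ℕ => ((0 : ℕ) : ℝ) / n) atTop (𝓝 0) := by simp
  have hlim := (tendsto_cast_sub_sub_div i hp ht).div
    (tendsto_cast_sub_sub_div (t := fun _ => 0) i zero_le_one hzero) (by norm_num)
  rw [sub_zero, div_one] at hlim
  refine hlim.congr' ?_
  filter_upwards [eventually_gt_atTop i] with n hn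
  have hsucc : n - i = n - (i + 1) + 1 := by omega
  have hn' : (0 : ℝ) < n := by exact_mod_cast (i.zero_le.trans_lt hn)
  rw [Pi.div_apply, div_div_div_cancel_right₀ hn'.ne', hsucc, Nat.choose_div_choose_succ]
  push_cast
  rfl

theorem tendsto_choose_sub_div_choose (j : ℕ) (hp : p ≤ 1)
    (ht : Tendsto (fun n : ℕ => (t n : ℝ) / n) atTop (𝓝 p)) :
    Tendsto (fun n : ℕ => ((n - (j + 1)).choose (t n) : ℝ) / n.choose (t n))
      atTop (𝓝 ((1 - p) ^ (j + 1))) := by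
  induction j with
  | zero => simpa using tendsto_choose_sub_succ_div_choose_sub 0 hp ht
  | succ j ih =>
    rw [pow_succ]
    refine (ih.mul (tendsto_choose_sub_succ_div_choose_sub (j + 1) hp ht)).congr fun n => ?_
    refine (div_eq_div_mul_div_of_zero_imp fun h => ?_).symm
    have hlt := Nat.choose_eq_zero_iff.mp (Nat.cast_eq_zero.mp h)
    exact_mod_cast Nat.choose_eq_zero_of_lt (lt_of_le_of_lt (by omega) hlt)

end

theorem stmt_13_general (m : ℕ) (p : ℝ) (hp0 : 0 < p) (hp1 : p ≤ 1)
    (t : ℕ → ℕ)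
    (ht : Filter.Tendsto (fun K' : ℕ => (t K' : ℝ) / (K' : ℝ)) Filter.atTop (nhds p)) :
    Filter.Tendsto
      (fun K' : ℕ =>
        ((K'.choose (t K' + 1) : ℝ) - ((K' - m).choose (t K' + 1) : ℝ)) / (K'.choose (t K') : ℝ))
      Filter.atTop (nhds (((1 - p) / p) * (1 - (1 - p) ^ m))) := by
  have hgeom : ∑ j ∈ range m, (1 - p) ^ (j + 1) = (1 - p) / p * (1 - (1 - p) ^ m) := by
    simp_rw [pow_succ, ← sum_mul, geom_sum_eq (by linarith : 1 - p ≠ 1)]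
    rw [sub_sub_cancel_left, div_neg]
    field_simp
    ring
  rw [← hgeom]
  refine (tendsto_finsetSum _ fun j _ => tendsto_choose_sub_div_choose j hp1 ht).congr' ?_
  filter_upwards [eventually_ge_atTop m] with n hn
  rw [← sum_div, ← Nat.sum_choose_add_choose_sub (t n) hn]
  push_cast
  ring

theorem stmt_13 (m : ℕ) (hm : 1 ≤ m) (p : ℝ) (hp0 : 0 < p) (hp1 : p ≤ 1)
    (t : ℕ → ℕ)
    (ht : Filter.Tendsto (fun K' : ℕ => (t K' : ℝ) / (K' : ℝ)) Filter.atTop (nhds p)) :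
    Filter.Tendsto
      (fun K' : ℕ =>
        ((K'.choose (t K' + 1) : ℝ) - ((K' - m).choose (t K' + 1) : ℝ)) / (K'.choose (t K') : ℝ))
      Filter.atTop (nhds (((1 - p) / p) * (1 - (1 - p) ^ m))) :=
  stmt_13_general m p hp0 hp1 t ht
end
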